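/- Let f : ℝ → ℝ be continuous and κ a real parameter. For all smooth compactly supported functions ψ, χ : ℝ³ → ℂ, the constraint operator φ̂₁ψ = −i f(x) e^{κφ} ∂_θψ is symmetric with respect to the L² inner product: ∫_{ℝ³} conj((φ̂₁ψ)(θ,φ,x)) · χ(θ,φ,x) dθ dφ dx = ∫_{ℝ³} conj(ψ(θ,φ,x)) · (φ̂₁χ)(θ,φ,x) dθ dφ dx. -/

import Mathlib

open MeasureTheory Complex

/-- The quantum constraint operator `φ̂₁ = −i f(x) e^{κφ} ∂_θ` acting on functions on
`ℝ × ℝ × ℝ = {(θ, φ, x)}`. -/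
noncomputable def opPhi₁ (f : ℝ → ℝ) (κ : ℝ) (ψ : ℝ × ℝ × ℝ → ℂ) (q : ℝ × ℝ × ℝ) : ℂ :=
  -Complex.I * (f q.2.2 : ℝ) * (Real.exp (κ * q.2.1) : ℝ)
    * deriv (fun t => ψ (t, q.2.1, q.2.2)) q.1

section Aux

open Filter Topology

/-- The θ-derivative of a smooth function, as evaluation of the Fréchet derivative. -/
noncomputable def thetaDeriv (ψ : ℝ × ℝ × ℝ → ℂ) (q : ℝ × ℝ × ℝ) : ℂ :=
  fderiv ℝ ψ q ((1 : ℝ), (0 : ℝ), (0 : ℝ))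

lemma hasDerivAt_slice {ψ : ℝ × ℝ × ℝ → ℂ} (hψ : ContDiff ℝ (⊤ : ℕ∞) ψ) (q : ℝ × ℝ × ℝ) :
    HasDerivAt (fun t => ψ (t, q.2.1, q.2.2)) (thetaDeriv ψ q) q.1 := by
  have h1 : HasFDerivAt ψ (fderiv ℝ ψ q) (q.1, q.2.1, q.2.2) :=
    (hψ.differentiable (by simp) _).hasFDerivAt
  have h2 : HasDerivAt (fun t : ℝ => ((t, q.2.1, q.2.2) : ℝ × ℝ × ℝ))
      ((1 : ℝ), (0 : ℝ), (0 : ℝ)) q.1 :=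
    (hasDerivAt_id q.1).prodMk ((hasDerivAt_const q.1 q.2.1).prodMk (hasDerivAt_const q.1 q.2.2))
  exact h1.comp_hasDerivAt q.1 h2

lemma continuous_thetaDeriv {ψ : ℝ × ℝ × ℝ → ℂ} (hψ : ContDiff ℝ (⊤ : ℕ∞) ψ) :
    Continuous (thetaDeriv ψ) :=
  (hψ.continuous_fderiv (by simp)).clm_apply continuous_const

lemma hasCompactSupport_thetaDeriv {ψ : ℝ × ℝ × ℝ → ℂ} (hψsupp : HasCompactSupport ψ) :
    HasCompactSupport (thetaDeriv ψ) :=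
  hψsupp.fderiv_apply ℝ ((1 : ℝ), (0 : ℝ), (0 : ℝ))

lemma closedEmbedding_slice (p : ℝ × ℝ) :
    Topology.IsClosedEmbedding (fun t : ℝ => ((t, p.1, p.2) : ℝ × ℝ × ℝ)) := by
  have : Isometry (fun t : ℝ => ((t, p.1, p.2) : ℝ × ℝ × ℝ)) := by
    intro a b
    simp [Prod.edist_eq]
  exact this.isClosedEmbedding

end Aux

/-- The constraint operator `φ̂₁ = −i f(x)e^{κφ}∂_θ` is symmetric with respect to the
`L²` inner product on smooth compactly supported wave functions. -/
theorem opPhi₁_symmetric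
    (f : ℝ → ℝ) (hf : Continuous f) (κ : ℝ)
    (ψ χ : ℝ × ℝ × ℝ → ℂ)
    (hψ : ContDiff ℝ (⊤ : ℕ∞) ψ) (hψsupp : HasCompactSupport ψ)
    (hχ : ContDiff ℝ (⊤ : ℕ∞) χ) (hχsupp : HasCompactSupport χ) :
    ∫ q : ℝ × ℝ × ℝ, (starRingEnd ℂ) (opPhi₁ f κ ψ q) * χ q
      = ∫ q : ℝ × ℝ × ℝ, (starRingEnd ℂ) (ψ q) * opPhi₁ f κ χ q := by
  -- the coefficient function
  set c : ℝ × ℝ × ℝ → ℂ := fun q => ((f q.2.2 : ℝ) : ℂ) * ((Real.exp (κ * q.2.1) : ℝ) : ℂ)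
    with hc
  have hc_cont : Continuous c :=
    (Complex.continuous_ofReal.comp (hf.comp (continuous_snd.comp continuous_snd))).mul
      (Complex.continuous_ofReal.comp (Real.continuous_exp.comp
        (continuous_const.mul (continuous_fst.comp continuous_snd))))
  -- rewrite the operator in terms of `thetaDeriv`
  have hop : ∀ (φ' : ℝ × ℝ × ℝ → ℂ), ContDiff ℝ (⊤ : ℕ∞) φ' → ∀ q,
      opPhi₁ f κ φ' q = -Complex.I * c q * thetaDeriv φ' q := by
    intro φ' hφ' q
    rw [opPhi₁, (hasDerivAt_slice hφ' q).deriv]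
    ring
  -- the two integrands
  have hcont₁ : Continuous fun q => (starRingEnd ℂ) (opPhi₁ f κ ψ q) * χ q := by
    have : (fun q => (starRingEnd ℂ) (opPhi₁ f κ ψ q) * χ q)
        = fun q => (starRingEnd ℂ) (-Complex.I * c q * thetaDeriv ψ q) * χ q := by
      funext q; rw [hop ψ hψ q]
    rw [this]
    exact (continuous_conj.comp ((continuous_const.mul hc_cont).mul
      (continuous_thetaDeriv hψ))).mul hχ.continuous
  have hcont₂ : Continuous fun q => (starRingEnd ℂ) (ψ q) * opPhi₁ f κ χ q := by
    have : (fun q => (starRingEnd ℂ) (ψ q) * opPhi₁ f κ χ q)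
        = fun q => (starRingEnd ℂ) (ψ q) * (-Complex.I * c q * thetaDeriv χ q) := by
      funext q; rw [hop χ hχ q]
    rw [this]
    exact (continuous_conj.comp hψ.continuous).mul
      ((continuous_const.mul hc_cont).mul (continuous_thetaDeriv hχ))
  have hsupp₁ : HasCompactSupport fun q => (starRingEnd ℂ) (opPhi₁ f κ ψ q) * χ q :=
    HasCompactSupport.mul_left hχsupp
  have hsupp₂ : HasCompactSupport fun q => (starRingEnd ℂ) (ψ q) * opPhi₁ f κ χ q := by
    have h : HasCompactSupport fun q => opPhi₁ f κ χ q := by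
      have : (fun q => opPhi₁ f κ χ q)
          = fun q => -Complex.I * c q * thetaDeriv χ q := by
        funext q; rw [hop χ hχ q]
      rw [this]
      exact HasCompactSupport.mul_left (hasCompactSupport_thetaDeriv hχsupp)
    exact HasCompactSupport.mul_left h
  have hint₁ : Integrable fun q : ℝ × ℝ × ℝ => (starRingEnd ℂ) (opPhi₁ f κ ψ q) * χ q :=
    hcont₁.integrable_of_hasCompactSupport hsupp₁
  have hint₂ : Integrable fun q : ℝ × ℝ × ℝ => (starRingEnd ℂ) (ψ q) * opPhi₁ f κ χ q :=
    hcont₂.integrable_of_hasCompactSupport hsupp₂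
  -- Fubini: integrate over θ first
  rw [Measure.volume_eq_prod ℝ (ℝ × ℝ)] at hint₁ hint₂ ⊢
  rw [integral_prod_symm _ hint₁, integral_prod_symm _ hint₂]
  -- pointwise in (φ, x)
  refine integral_congr_ae (Filter.Eventually.of_forall fun p => ?_)
  dsimp only
  -- slice data
  have hemb := closedEmbedding_slice p
  set u : ℝ → ℂ := fun θ => (starRingEnd ℂ) (ψ (θ, p.1, p.2)) with hu_def
  set v : ℝ → ℂ := fun θ => χ (θ, p.1, p.2) with hv_def
  set u' : ℝ → ℂ := fun θ => (starRingEnd ℂ) (thetaDeriv ψ (θ, p.1, p.2)) with hu'_def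
  set v' : ℝ → ℂ := fun θ => thetaDeriv χ (θ, p.1, p.2) with hv'_def
  have hu : ∀ θ, HasDerivAt u (u' θ) θ := by
    intro θ
    have h := hasDerivAt_slice hψ (θ, p.1, p.2)
    have := (Complex.conjCLE.toContinuousLinearMap.hasFDerivAt
      (x := ψ (θ, p.1, p.2))).comp_hasDerivAt θ h
    exact this
  have hv : ∀ θ, HasDerivAt v (v' θ) θ := fun θ => hasDerivAt_slice hχ (θ, p.1, p.2)
  have hu_cont : Continuous u := continuous_conj.comp (hψ.continuous.comp hemb.continuous)
  have hv_cont : Continuous v := hχ.continuous.comp hemb.continuous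
  have hu'_cont : Continuous u' :=
    continuous_conj.comp ((continuous_thetaDeriv hψ).comp hemb.continuous)
  have hv'_cont : Continuous v' := (continuous_thetaDeriv hχ).comp hemb.continuous
  have hv_supp : HasCompactSupport v := hχsupp.comp_isClosedEmbedding hemb
  have hu_supp : HasCompactSupport u := by
    have : HasCompactSupport fun θ => ψ (θ, p.1, p.2) := hψsupp.comp_isClosedEmbedding hemb
    exact this.comp_left (g := starRingEnd ℂ) (by simp)
  have huv' : Integrable (u * v') :=
    (hu_cont.mul hv'_cont).integrable_of_hasCompactSupport (hu_supp.mul_right)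
  have hu'v : Integrable (u' * v) :=
    (hu'_cont.mul hv_cont).integrable_of_hasCompactSupport (HasCompactSupport.mul_left hv_supp)
  have huv : Integrable (u * v) :=
    (hu_cont.mul hv_cont).integrable_of_hasCompactSupport (HasCompactSupport.mul_left hv_supp)
  have hibp : ∫ θ : ℝ, u θ * v' θ = - ∫ θ : ℝ, u' θ * v θ :=
    integral_mul_deriv_eq_deriv_mul_of_integrable (fun x _ => hu x) (fun x _ => hv x) huv' hu'v huv
  -- coefficient is constant on the slice
  have hcp : ∀ θ : ℝ, c (θ, p.1, p.2) = c (0, p.1, p.2) := fun θ => rfl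
  calc ∫ θ : ℝ, (starRingEnd ℂ) (opPhi₁ f κ ψ (θ, p.1, p.2)) * χ (θ, p.1, p.2)
      = ∫ θ : ℝ, (Complex.I * c (0, p.1, p.2)) * (u' θ * v θ) := by
        refine integral_congr_ae (Filter.Eventually.of_forall fun θ => ?_)
        dsimp only
        rw [hop ψ hψ (θ, p.1, p.2)]
        simp only [map_mul, map_neg, Complex.conj_I, Complex.conj_ofReal, hc, hu'_def, hv_def]
        push_cast
        ring
    _ = (Complex.I * c (0, p.1, p.2)) * ∫ θ : ℝ, u' θ * v θ := integral_const_mul _ _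
    _ = (-Complex.I * c (0, p.1, p.2)) * ∫ θ : ℝ, u θ * v' θ := by
        rw [hibp]; ring
    _ = ∫ θ : ℝ, (-Complex.I * c (0, p.1, p.2)) * (u θ * v' θ) := (integral_const_mul _ _).symm
    _ = ∫ θ : ℝ, (starRingEnd ℂ) (ψ (θ, p.1, p.2)) * opPhi₁ f κ χ (θ, p.1, p.2) := by
        refine integral_congr_ae (Filter.Eventually.of_forall fun θ => ?_)
        dsimp only
        rw [hop χ hχ (θ, p.1, p.2)]
        simp only [hc, hu_def, hv'_def]
        ring
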